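/- Let E be a Polish space with its Borel σ-algebra, (μ_n) and μ Borel probability measures on E with μ_n converging weakly to μ. Let h : E → ℝ be continuous, integrable with respect to each μ_n and with respect to μ, and such that ∫ |h| dμ_n → ∫ |h| dμ < ∞, and let ℓ : E → ℝ be continuous and bounded. Then ∫ h·ℓ dμ_n → ∫ h·ℓ dμ. -/

import Mathlib

open MeasureTheory Filter Topology

/-!
For a continuous `f ≥ 0`, weak convergence alone gives the lower bound
`∫ f dμ ≤ liminf ∫ f dμₙ`: approximate `f` from below by the bounded truncations `min f k`.
With `|ℓ| ≤ C`, apply this to `f = C |h| ± h ℓ ≥ 0`; since `∫ C |h| dμₙ` converges to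
`∫ C |h| dμ`, the `C |h|` part can be subtracted, leaving `liminf ∫ ± h ℓ dμₙ ≥ ∫ ± h ℓ dμ`.
-/

theorem eventually_lt_sub_of_tendsto {ι : Type*} {l : Filter ι} {u v : ι → ℝ} {x y : ℝ}
    (hu : ∀ a < x, ∀ᶠ n in l, a < u n) (hv : Tendsto v l (𝓝 y)) {a : ℝ} (ha : a < x - y) :
    ∀ᶠ n in l, a < u n - v n := by
  obtain ⟨c, hac, hcx⟩ := exists_between (show a + y < x by linarith)
  filter_upwards [hu c hcx, (tendsto_order.1 hv).2 (c - a) (by linarith)] with n hun hvn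
  linarith

theorem tendsto_integral_min_natCast {E : Type*} [MeasurableSpace E] {ν : Measure E}
    {f : E → ℝ} (hf : Integrable f ν) :
    Tendsto (fun k : ℕ => ∫ x, min (f x) k ∂ν) atTop (𝓝 (∫ x, f x ∂ν)) := by
  refine tendsto_integral_of_dominated_convergence (fun x => ‖f x‖)
    (fun k => hf.aestronglyMeasurable.inf aestronglyMeasurable_const) hf.norm
    (fun k => Eventually.of_forall fun x => ?_) (Eventually.of_forall fun x => ?_)
  · rw [Real.norm_eq_abs, Real.norm_eq_abs, abs_le]
    exact ⟨le_min (neg_abs_le _) ((neg_nonpos.2 (abs_nonneg _)).trans k.cast_nonneg),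
      (min_le_left _ _).trans (le_abs_self _)⟩
  · refine tendsto_const_nhds.congr' ?_
    filter_upwards [eventually_ge_atTop ⌈f x⌉₊] with k hk
    exact (min_eq_left ((Nat.le_ceil _).trans (by exact_mod_cast hk))).symm

section WeakConvergence

variable {E : Type*} [TopologicalSpace E] [MeasurableSpace E] [OpensMeasurableSpace E]
  {μ : ℕ → Measure E} {μlim : Measure E} [∀ n, IsFiniteMeasure (μ n)]

theorem eventually_lt_integral_of_forall_tendsto_integral
    (hweak : ∀ g : BoundedContinuousFunction E ℝ,
      Tendsto (fun n => ∫ x, g x ∂(μ n)) atTop (𝓝 (∫ x, g x ∂μlim)))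
    {f : E → ℝ} (hfc : Continuous f) (hf₀ : 0 ≤ f) (hfint : ∀ n, Integrable f (μ n))
    (hflim : Integrable f μlim) {a : ℝ} (ha : a < ∫ x, f x ∂μlim) :
    ∀ᶠ n in atTop, a < ∫ x, f x ∂(μ n) := by
  obtain ⟨k, hk⟩ := ((tendsto_order.1 (tendsto_integral_min_natCast hflim)).1 a ha).exists
  let g : BoundedContinuousFunction E ℝ :=
    .ofNormedAddCommGroup (fun x => min (f x) k) (hfc.min continuous_const) k fun x => by
      rw [Real.norm_eq_abs, abs_of_nonneg (le_min (hf₀ x) k.cast_nonneg)]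
      exact min_le_right _ _
  filter_upwards [(tendsto_order.1 (hweak g)).1 a hk] with n hn
  exact hn.trans_le (integral_mono (g.integrable _) (hfint n) fun x => min_le_left _ _)

theorem eventually_lt_integral_mul_of_forall_tendsto_integral
    (hweak : ∀ g : BoundedContinuousFunction E ℝ,
      Tendsto (fun n => ∫ x, g x ∂(μ n)) atTop (𝓝 (∫ x, g x ∂μlim)))
    {h : E → ℝ} (hhc : Continuous h) (hhint : ∀ n, Integrable h (μ n))
    (hhintlim : Integrable h μlim)
    (hhabs : Tendsto (fun n => ∫ x, |h x| ∂(μ n)) atTop (𝓝 (∫ x, |h x| ∂μlim)))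
    {ℓ : E → ℝ} (hℓc : Continuous ℓ) {C : ℝ} (hℓC : ∀ x, |ℓ x| ≤ C)
    {a : ℝ} (ha : a < ∫ x, h x * ℓ x ∂μlim) :
    ∀ᶠ n in atTop, a < ∫ x, h x * ℓ x ∂(μ n) := by
  have hmul : ∀ ν : Measure E, Integrable h ν → Integrable (fun x => h x * ℓ x) ν :=
    fun ν hν => hν.mul_bdd hℓc.aestronglyMeasurable (.of_forall hℓC)
  have hf₀ : 0 ≤ fun x => C * |h x| + h x * ℓ x := fun x => by
    have hbound : |h x| * |ℓ x| ≤ |h x| * C := mul_le_mul_of_nonneg_left (hℓC x) (abs_nonneg _)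
    have := abs_mul (h x) (ℓ x) ▸ neg_abs_le (h x * ℓ x)
    dsimp only [Pi.zero_apply]
    linarith
  have hsplit : ∀ ν : Measure E, Integrable h ν →
      ∫ x, C * |h x| + h x * ℓ x ∂ν - C * ∫ x, |h x| ∂ν = ∫ x, h x * ℓ x ∂ν := fun ν hν => by
    rw [integral_add (hν.abs.const_mul C) (hmul ν hν), integral_const_mul, add_sub_cancel_left]
  have hlower := eventually_lt_sub_of_tendsto
    (fun b hb => eventually_lt_integral_of_forall_tendsto_integral hweak
      (f := fun x => C * |h x| + h x * ℓ x) (by fun_prop) hf₀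
      (fun n => ((hhint n).abs.const_mul C).add (hmul _ (hhint n)))
      ((hhintlim.abs.const_mul C).add (hmul _ hhintlim)) hb)
    (hhabs.const_mul C) (a := a) (by rwa [hsplit μlim hhintlim])
  filter_upwards [hlower] with n hn
  rwa [hsplit (μ n) (hhint n)] at hn

end WeakConvergence

theorem integral_mul_bounded_convergence_general
    {E : Type*} [TopologicalSpace E]
    [MeasurableSpace E] [BorelSpace E]
    (μ : ℕ → Measure E) (μlim : Measure E)
    [∀ n, IsProbabilityMeasure (μ n)]
    (hweak : ∀ g : BoundedContinuousFunction E ℝ,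
      Tendsto (fun n => ∫ x, g x ∂(μ n)) atTop (𝓝 (∫ x, g x ∂μlim)))
    (h : E → ℝ) (hhc : Continuous h)
    (hhint : ∀ n, Integrable h (μ n)) (hhintlim : Integrable h μlim)
    (hhabs : Tendsto (fun n => ∫ x, |h x| ∂(μ n)) atTop (𝓝 (∫ x, |h x| ∂μlim)))
    (ℓ : E → ℝ) (hℓc : Continuous ℓ) (hℓb : ∃ B : ℝ, ∀ x, |ℓ x| ≤ B) :
    Tendsto (fun n => ∫ x, h x * ℓ x ∂(μ n)) atTop (𝓝 (∫ x, h x * ℓ x ∂μlim)) := by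
  obtain ⟨B, hB⟩ := hℓb
  have hnegB : ∀ x, |(-ℓ) x| ≤ B := fun x => (abs_neg (ℓ x)).trans_le (hB x)
  refine tendsto_order.2 ⟨fun a ha => eventually_lt_integral_mul_of_forall_tendsto_integral
    hweak hhc hhint hhintlim hhabs hℓc hB ha, fun b hb => ?_⟩
  have hneg := eventually_lt_integral_mul_of_forall_tendsto_integral hweak hhc hhint hhintlim
    hhabs hℓc.neg hnegB (a := -b) (by simpa [integral_neg] using hb)
  filter_upwards [hneg] with n hn
  simpa [integral_neg] using hn

/-- The key uniform-integrability step in the proof of Corollary 3: if `μ n` converge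
weakly to `μlim`, `h` is continuous and integrable with convergent absolute moments, and
`ℓ` is continuous and bounded, then `∫ h·ℓ dμ_n → ∫ h·ℓ dμ`. -/
theorem integral_mul_bounded_convergence
    {E : Type*} [TopologicalSpace E] [PolishSpace E]
    [MeasurableSpace E] [BorelSpace E]
    (μ : ℕ → Measure E) (μlim : Measure E)
    [∀ n, IsProbabilityMeasure (μ n)] [IsProbabilityMeasure μlim]
    (hweak : ∀ g : BoundedContinuousFunction E ℝ,
      Tendsto (fun n => ∫ x, g x ∂(μ n)) atTop (𝓝 (∫ x, g x ∂μlim)))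
    (h : E → ℝ) (hhc : Continuous h)
    (hhint : ∀ n, Integrable h (μ n)) (hhintlim : Integrable h μlim)
    (hhabs : Tendsto (fun n => ∫ x, |h x| ∂(μ n)) atTop (𝓝 (∫ x, |h x| ∂μlim)))
    (ℓ : E → ℝ) (hℓc : Continuous ℓ) (hℓb : ∃ B : ℝ, ∀ x, |ℓ x| ≤ B) :
    Tendsto (fun n => ∫ x, h x * ℓ x ∂(μ n)) atTop (𝓝 (∫ x, h x * ℓ x ∂μlim)) :=
  integral_mul_bounded_convergence_general μ μlim hweak h hhc hhint hhintlim hhabs ℓ hℓc hℓb
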